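/- Let q ∈ [1,∞]. For every nonzero signal f : V → X, the uncertainty inequality ‖f‖_1 · ‖f̂‖_1 / (‖f‖_q · ‖f̂‖_q) ≥ 1 / (κ_q(U) · κ_q(U*)) holds. In particular, ‖f‖_1‖f̂‖_1 / (‖f‖_2‖f̂‖_2) ≥ 1. -/

import Mathlib

open Finset
open scoped ENNReal

/-- The `L^p` norm of a signal `f : Fin N → E` (sup-norm when `p = ∞`). -/
noncomputable def gsNorm {E : Type*} [NormedAddCommGroup E] {N : ℕ} (p : ℝ≥0∞)
    (f : Fin N → E) : ℝ :=
  if p = ∞ then ⨆ n, ‖f n‖ else (∑ n, ‖f n‖ ^ p.toReal) ^ (1 / p.toReal)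

/-- `u k` is the `k`-th column of a unitary matrix, i.e. the family of columns is
orthonormal for the standard inner product on `𝕂^N` (hence an orthonormal basis). -/
def OrthoBasis {𝕂 : Type*} [RCLike 𝕂] {N : ℕ} (u : Fin N → Fin N → 𝕂) : Prop :=
  ∀ k l : Fin N, ∑ n, (starRingEnd 𝕂) (u k n) * u l n = if k = l then (1 : 𝕂) else 0

/-- Graph Fourier transform: `f̂ k = ∑ n, conj (u k n) • f n`. -/
noncomputable def gft {𝕂 : Type*} [RCLike 𝕂] {X : Type*} [NormedAddCommGroup X]
    [NormedSpace 𝕂 X] {N : ℕ} (u : Fin N → Fin N → 𝕂) (f : Fin N → X) : Fin N → X :=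
  fun k => ∑ n, (starRingEnd 𝕂) (u k n) • f n

/-- `p`-coherence `κ_p(U)`: the maximum of the `ℓ^p` norms of the columns of `U`. -/
noncomputable def coh {𝕂 : Type*} [RCLike 𝕂] {N : ℕ} (p : ℝ≥0∞)
    (u : Fin N → Fin N → 𝕂) : ℝ :=
  ⨆ k, gsNorm p (u k)

/-- Mixed norm `‖U‖_{p,q}`: the `ℓ^q` norm of the vector of `ℓ^p` norms of the columns. -/
noncomputable def mixNorm {𝕂 : Type*} [RCLike 𝕂] {N : ℕ} (p q : ℝ≥0∞)
    (u : Fin N → Fin N → 𝕂) : ℝ :=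
  gsNorm q (fun k => gsNorm p (u k))

/-- Graph convolution of a scalar signal `α` with a signal `f`:
`(α*f)(n) = ∑ k, u k n • (α̂ k • f̂ k)`. -/
noncomputable def gconv {𝕂 : Type*} [RCLike 𝕂] {X : Type*} [NormedAddCommGroup X]
    [NormedSpace 𝕂 X] {N : ℕ} (u : Fin N → Fin N → 𝕂) (α : Fin N → 𝕂)
    (f : Fin N → X) : Fin N → X :=
  fun n => ∑ k, u k n • (gft u α k • gft u f k)

/-- Graph translation operator `T_m f (n) = ∑ k, (u k n * conj (u k m)) • f̂ k`. -/
noncomputable def gtrans {𝕂 : Type*} [RCLike 𝕂] {X : Type*} [NormedAddCommGroup X]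
    [NormedSpace 𝕂 X] {N : ℕ} (u : Fin N → Fin N → 𝕂) (m : Fin N)
    (f : Fin N → X) : Fin N → X :=
  fun n => ∑ k, (u k n * (starRingEnd 𝕂) (u k m)) • gft u f k

/-! The transform and its inverse write `f̂ = ∑ₙ f(n) • conj (u(n))` and `f = ∑ₖ f̂(k) • u_k`,
superpositions of the rows, resp. columns, of `U`. Minkowski's inequality in `ℓ^q` gives
`‖f̂‖_q ≤ κ_q(U*) ‖f‖_1` and `‖f‖_q ≤ κ_q(U) ‖f̂‖_1`, and multiplying them is the uncertainty
inequality. For `q = 2` both coherences are `1`, since the rows and columns of a unitary matrix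
are unit vectors. -/

section GsNorm

variable {E : Type*} [NormedAddCommGroup E] {N : ℕ}

lemma gsNorm_nonneg (p : ℝ≥0∞) (f : Fin N → E) : 0 ≤ gsNorm p f := by
  unfold gsNorm
  split
  · exact Real.iSup_nonneg fun n => norm_nonneg _
  · positivity

lemma gsNorm_congr_norm {F : Type*} [NormedAddCommGroup F] (p : ℝ≥0∞) {f : Fin N → E}
    {g : Fin N → F} (h : ∀ n, ‖f n‖ = ‖g n‖) : gsNorm p f = gsNorm p g := by
  simp only [gsNorm, h]

lemma gsNorm_one (f : Fin N → E) : gsNorm 1 f = ∑ n, ‖f n‖ := by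
  simp [gsNorm]

variable {p : ℝ≥0∞} [Fact (1 ≤ p)]

lemma gsNorm_eq_norm_toLp (f : Fin N → E) :
    gsNorm p f = ‖WithLp.toLp p f‖ := by
  rcases eq_or_ne p ∞ with rfl | hp
  · rw [gsNorm, if_pos rfl, PiLp.norm_eq_ciSup]
  · have hp' : 0 < p.toReal := ENNReal.toReal_pos (zero_lt_one.trans_le Fact.out).ne' hp
    rw [gsNorm, if_neg hp, PiLp.norm_eq_sum hp']

lemma gsNorm_pos {f : Fin N → E} (hf : f ≠ 0) : 0 < gsNorm p f := by
  rw [gsNorm_eq_norm_toLp, norm_pos_iff]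
  simpa using hf

lemma gsNorm_sum_le {ι : Type*} (s : Finset ι) (F : ι → Fin N → E) :
    gsNorm p (∑ i ∈ s, F i) ≤ ∑ i ∈ s, gsNorm p (F i) := by
  simp only [gsNorm_eq_norm_toLp, WithLp.toLp_sum]
  exact norm_sum_le _ _

lemma gsNorm_smul {𝕜 : Type*} [NormedField 𝕜] [NormedSpace 𝕜 E] (r : 𝕜) (f : Fin N → E) :
    gsNorm p (r • f) = ‖r‖ * gsNorm p f := by
  simp only [gsNorm_eq_norm_toLp, WithLp.toLp_smul, norm_smul]

lemma gsNorm_smul_const {𝕜 : Type*} [NormedField 𝕜] [NormedSpace 𝕜 E] (c : Fin N → 𝕜) (x : E) :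
    gsNorm p (fun k => c k • x) = gsNorm p c * ‖x‖ := by
  calc gsNorm p (fun k => c k • x) = gsNorm p (‖x‖ • fun k => ‖c k‖) :=
        gsNorm_congr_norm p fun k => by simp [norm_smul, mul_comm]
    _ = gsNorm p c * ‖x‖ := by
        rw [gsNorm_smul, norm_norm, mul_comm, gsNorm_congr_norm p fun k => norm_norm (c k)]

lemma gsNorm_sum_smul_le {𝕜 : Type*} [NormedField 𝕜] [NormedSpace 𝕜 E]
    (a : Fin N → Fin N → 𝕜) (f : Fin N → E) :
    gsNorm p (fun k => ∑ n, a k n • f n) ≤ (⨆ n, gsNorm p (fun k => a k n)) * gsNorm 1 f := by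
  have hbdd : BddAbove (Set.range fun n => gsNorm p (fun k => a k n)) :=
    (Set.finite_range _).bddAbove
  calc gsNorm p (fun k => ∑ n, a k n • f n) = gsNorm p (∑ n, fun k => a k n • f n) := by
        simp only [Finset.sum_fn]
    _ ≤ ∑ n, gsNorm p (fun k => a k n) * ‖f n‖ := by
        simpa only [gsNorm_smul_const] using gsNorm_sum_le (p := p) univ fun n k => a k n • f n
    _ ≤ ∑ n, (⨆ n, gsNorm p (fun k => a k n)) * ‖f n‖ := by
        gcongr with n; exact le_ciSup hbdd n
    _ = (⨆ n, gsNorm p (fun k => a k n)) * gsNorm 1 f := by rw [gsNorm_one, mul_sum]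

end GsNorm

lemma coh_nonneg {𝕂 : Type*} [RCLike 𝕂] {N : ℕ} (p : ℝ≥0∞) (u : Fin N → Fin N → 𝕂) :
    0 ≤ coh p u :=
  Real.iSup_nonneg fun k => gsNorm_nonneg p (u k)

section OrthoBasis

variable {𝕂 : Type*} [RCLike 𝕂] {N : ℕ} {u : Fin N → Fin N → 𝕂}

lemma orthoBasis_iff_mem_unitaryGroup :
    OrthoBasis u ↔ Matrix.of (fun n k => u k n) ∈ Matrix.unitaryGroup (Fin N) 𝕂 := by
  rw [Matrix.mem_unitaryGroup_iff', ← Matrix.ext_iff]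
  simp [OrthoBasis, Matrix.mul_apply, Matrix.one_apply]

lemma OrthoBasis.transpose (hU : OrthoBasis u) : OrthoBasis (fun n k => u k n) := by
  rw [orthoBasis_iff_mem_unitaryGroup] at hU ⊢
  exact Matrix.transpose_mem_unitaryGroup_iff.mpr hU

lemma OrthoBasis.gsNorm_two_eq_one (hU : OrthoBasis u) (k : Fin N) : gsNorm 2 (u k) = 1 := by
  have h := congrArg RCLike.re (hU k k)
  simp only [RCLike.conj_mul, map_sum, ← RCLike.ofReal_pow, RCLike.ofReal_re, if_pos,
    RCLike.one_re] at h
  rw [gsNorm_eq_norm_toLp, ← pow_eq_one_iff_of_nonneg (norm_nonneg _) two_ne_zero,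
    PiLp.norm_sq_eq_of_L2]
  exact h

lemma OrthoBasis.coh_two (hU : OrthoBasis u) [Nonempty (Fin N)] : coh 2 u = 1 := by
  simp [coh, hU.gsNorm_two_eq_one]

variable {X : Type*} [NormedAddCommGroup X] [NormedSpace 𝕂 X]

lemma OrthoBasis.sum_smul_gft (hU : OrthoBasis u) (f : Fin N → X) :
    (fun n => ∑ k, u k n • gft u f k) = f := by
  funext n
  calc ∑ k, u k n • gft u f k = ∑ m, (∑ k, (starRingEnd 𝕂) (u k m) * u k n) • f m := by
        simp only [gft, smul_sum, smul_smul, sum_smul, mul_comm (u _ n)]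
        exact sum_comm
    _ = f n := by
        have h := hU.transpose
        simp only [OrthoBasis] at h
        simp [h]

end OrthoBasis

lemma one_div_le_div_of_le_mul {P A c : ℝ} (hP : 0 < P) (hA : 0 ≤ A) (h : P ≤ c * A) :
    1 / c ≤ A / P := by
  have hc : 0 < c := pos_of_mul_pos_left (hP.trans_le h) hA
  rw [div_le_div_iff₀ hc hP]
  linarith

section Uncertainty

variable {𝕂 : Type*} [RCLike 𝕂] {X : Type*} [NormedAddCommGroup X] [NormedSpace 𝕂 X]
  {N : ℕ} {u : Fin N → Fin N → 𝕂} {p : ℝ≥0∞} [Fact (1 ≤ p)]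

lemma gsNorm_gft_le_coh_mul (f : Fin N → X) :
    gsNorm p (gft u f) ≤ coh p (fun n k => u k n) * gsNorm 1 f := by
  have hcoh : (⨆ n, gsNorm p fun k => (starRingEnd 𝕂) (u k n)) = coh p (fun n k => u k n) :=
    iSup_congr fun n => gsNorm_congr_norm p fun k => RCLike.norm_conj _
  rw [← hcoh]
  exact gsNorm_sum_smul_le (p := p) (fun k n => (starRingEnd 𝕂) (u k n)) f

lemma OrthoBasis.gsNorm_le_coh_mul (hU : OrthoBasis u) (f : Fin N → X) :
    gsNorm p f ≤ coh p u * gsNorm 1 (gft u f) := by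
  conv_lhs => rw [← hU.sum_smul_gft f]
  exact gsNorm_sum_smul_le (fun n k => u k n) (gft u f)

lemma OrthoBasis.gft_ne_zero (hU : OrthoBasis u) {f : Fin N → X} (hf : f ≠ 0) :
    gft u f ≠ 0 := by
  intro hzero
  apply hf
  rw [← hU.sum_smul_gft f, hzero]
  funext n
  simp

lemma OrthoBasis.one_div_coh_mul_coh_le (hU : OrthoBasis u) {f : Fin N → X} (hf : f ≠ 0) :
    1 / (coh p u * coh p (fun n k => u k n)) ≤
      (gsNorm 1 f * gsNorm 1 (gft u f)) / (gsNorm p f * gsNorm p (gft u f)) := by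
  refine one_div_le_div_of_le_mul (mul_pos (gsNorm_pos hf) (gsNorm_pos (hU.gft_ne_zero hf)))
    (mul_nonneg (gsNorm_nonneg 1 f) (gsNorm_nonneg 1 _)) ?_
  calc gsNorm p f * gsNorm p (gft u f)
      ≤ (coh p u * gsNorm 1 (gft u f)) * (coh p (fun n k => u k n) * gsNorm 1 f) :=
        mul_le_mul (hU.gsNorm_le_coh_mul f) (gsNorm_gft_le_coh_mul f) (gsNorm_nonneg p _)
          (mul_nonneg (coh_nonneg p u) (gsNorm_nonneg 1 _))
    _ = coh p u * coh p (fun n k => u k n) * (gsNorm 1 f * gsNorm 1 (gft u f)) := by ring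

end Uncertainty

theorem gft_uncertainty_two_general {𝕂 : Type*} [RCLike 𝕂] {X : Type*} [NormedAddCommGroup X]
    [NormedSpace 𝕂 X] {N : ℕ}
    (u : Fin N → Fin N → 𝕂) (hU : OrthoBasis u)
    (q : ℝ≥0∞) (hq : 1 ≤ q) :
    ∀ f : Fin N → X, f ≠ 0 →
      ((gsNorm 1 f * gsNorm 1 (gft u f)) / (gsNorm q f * gsNorm q (gft u f)) ≥
        1 / (coh q u * coh q (fun n k => u k n))) ∧
      ((gsNorm 1 f * gsNorm 1 (gft u f)) / (gsNorm 2 f * gsNorm 2 (gft u f)) ≥ 1) := by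
  intro f hf
  obtain ⟨n, -⟩ := Function.ne_iff.mp hf
  have : Nonempty (Fin N) := ⟨n⟩
  have : Fact (1 ≤ q) := ⟨hq⟩
  refine ⟨hU.one_div_coh_mul_coh_le hf, ?_⟩
  simpa [hU.coh_two, hU.transpose.coh_two] using hU.one_div_coh_mul_coh_le (p := 2) hf

/-- uncertainty principle
`‖f‖_1‖f̂‖_1 / (‖f‖_q‖f̂‖_q) ≥ 1/(κ_q(U)·κ_q(U*))`, with the particular case `q = 2`. -/
theorem gft_uncertainty_two {𝕂 : Type*} [RCLike 𝕂] {X : Type*} [NormedAddCommGroup X]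
    [NormedSpace 𝕂 X] [CompleteSpace X] {N : ℕ} (hN : 0 < N)
    (u : Fin N → Fin N → 𝕂) (hU : OrthoBasis u)
    (q : ℝ≥0∞) (hq : 1 ≤ q) :
    ∀ f : Fin N → X, f ≠ 0 →
      ((gsNorm 1 f * gsNorm 1 (gft u f)) / (gsNorm q f * gsNorm q (gft u f)) ≥
        1 / (coh q u * coh q (fun n k => u k n))) ∧
      ((gsNorm 1 f * gsNorm 1 (gft u f)) / (gsNorm 2 f * gsNorm 2 (gft u f)) ≥ 1) :=
  gft_uncertainty_two_general u hU q hq
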